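/- Let α be strictly increasing with α_n > 1 and α_n → ∞. The Cesàro operator C on Λ₀(α) is power bounded (indeed p_k(C^n x) ≤ p_k(x) for all n, k and x ∈ Λ₀(α)) and uniformly mean ergodic: the Cesàro means C_[n] := (1/n)·Σ_{m=1}^n C^m converge in L_b(Λ₀(α)). Moreover, Λ₀(α) = Ker(I − C) ⊕ closure((I − C)(Λ₀(α))), where Ker(I − C) = span{𝟙} with 𝟙 = (1,1,1,…), and closure((I − C)(Λ₀(α))) = {x ∈ Λ₀(α) : x_1 = 0}, which equals the closed linear span of {e_n : n ≥ 2}. -/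

import Mathlib

open Filter Finset Topology

noncomputable section

/-- The weight `w_k(n) = e^{-alpha_n / k}`.  Indices are shifted by one: the natural
numbers `k n : Nat` represent the indices `k+1` and `n+1` (both running from `1`). -/
def wt (a : ℕ → ℝ) (k n : ℕ) : ℝ := Real.exp (-(a n) / ((k : ℝ) + 1))

/-- Membership in the power series space of finite type `Λ₀(α)`:
`x ∈ Λ₀(α)` iff `w_k(n)|x_n| → 0` for every `k ≥ 1`. -/
def memLambda (a : ℕ → ℝ) (x : ℕ → ℂ) : Prop :=
  ∀ k : ℕ, Tendsto (fun n => wt a k n * ‖x n‖) atTop (𝓝 0)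

/-- The norm `p_k(x) = sup_n w_k(n)|x_n|` generating the Fréchet topology of `Λ₀(α)`. -/
def pk (a : ℕ → ℝ) (k : ℕ) (x : ℕ → ℂ) : ℝ := ⨆ n : ℕ, wt a k n * ‖x n‖

/-- The discrete Cesàro operator `(C x)_n = (x_1 + ⋯ + x_n)/n` (0-indexed). -/
def cesaro (x : ℕ → ℂ) : ℕ → ℂ := fun n => (∑ i ∈ Finset.range (n + 1), x i) / ((n : ℂ) + 1)

/-- The closure of a subset `S` of `Λ₀(α)` in the Fréchet topology of `Λ₀(α)`
(generated by the increasing sequence of norms `p_k`). -/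
def closureIn (a : ℕ → ℝ) (S : Set (ℕ → ℂ)) : Set (ℕ → ℂ) :=
  {x | memLambda a x ∧ ∀ k : ℕ, ∀ ε : ℝ, 0 < ε → ∃ y ∈ S, pk a k (x - y) < ε}

/-- The Cesàro means `C_[n] = (1/n) ∑_{m=1}^n C^m` of the Cesàro operator. -/
def cesMean (n : ℕ) (x : ℕ → ℂ) : ℕ → ℂ :=
  ((n : ℂ))⁻¹ • ∑ m ∈ Finset.range n, cesaro^[m + 1] x




lemma wt_pos (a : ℕ → ℝ) (k n : ℕ) : 0 < wt a k n := Real.exp_pos _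

lemma wt_le_one (a : ℕ → ℝ) (h1 : ∀ n, 1 < a n) (k n : ℕ) : wt a k n ≤ 1 := by
  rw [wt]
  apply Real.exp_le_one_iff.mpr
  have := h1 n
  have h : (0:ℝ) < (k:ℝ) + 1 := by positivity
  apply div_nonpos_of_nonpos_of_nonneg (by linarith) h.le

lemma wt_anti (a : ℕ → ℝ) (hmono : StrictMono a) (k : ℕ) {m n : ℕ} (h : m ≤ n) :
    wt a k n ≤ wt a k m := by
  apply Real.exp_le_exp.mpr
  have := hmono.monotone h
  have hk : (0:ℝ) < (k:ℝ) + 1 := by positivity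
  gcongr

lemma exp_div_tendsto (a : ℕ → ℝ) (htop : Tendsto a atTop atTop) {C : ℝ} (hC : 0 < C) :
    Tendsto (fun n => Real.exp (-(a n) / C)) atTop (𝓝 0) := by
  apply Real.tendsto_exp_atBot.comp
  have h1 : Tendsto (fun n => a n / C) atTop atTop := htop.atTop_div_const hC
  exact (tendsto_neg_atTop_atBot.comp h1).congr (fun n => by simp [Function.comp, neg_div])

lemma wt_tendsto (a : ℕ → ℝ) (htop : Tendsto a atTop atTop) (k : ℕ) :
    Tendsto (fun n => wt a k n) atTop (𝓝 0) := exp_div_tendsto a htop (by positivity)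

lemma wt_succ (a : ℕ → ℝ) (k n : ℕ) :
    wt a k n = wt a (k+1) n * Real.exp (-(a n) / (((k:ℝ)+1) * ((k:ℝ)+2))) := by
  rw [wt, wt, ← Real.exp_add]
  congr 1
  have h1 : ((k:ℝ)+1) ≠ 0 := by positivity
  have h2 : ((k:ℝ)+2) ≠ 0 := by positivity
  push_cast
  field_simp
  ring







lemma mem_bdd {a : ℕ → ℝ} {x : ℕ → ℂ} (hx : memLambda a x) (k : ℕ) :
    BddAbove (Set.range fun n => wt a k n * ‖x n‖) :=
  (hx k).bddAbove_range

lemma pk_nonneg (a : ℕ → ℝ) (k : ℕ) (x : ℕ → ℂ) : 0 ≤ pk a k x :=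
  Real.iSup_nonneg fun n => mul_nonneg (wt_pos a k n).le (norm_nonneg _)

lemma le_pk {a : ℕ → ℝ} {x : ℕ → ℂ} (hx : memLambda a x) (k n : ℕ) :
    wt a k n * ‖x n‖ ≤ pk a k x :=
  le_ciSup (mem_bdd hx k) n

lemma pk_le {a : ℕ → ℝ} {x : ℕ → ℂ} {k : ℕ} {M : ℝ}
    (h : ∀ n, wt a k n * ‖x n‖ ≤ M) : pk a k x ≤ M :=
  ciSup_le h

lemma abs_le_div {a : ℕ → ℝ} {x : ℕ → ℂ} (hmono : StrictMono a) (hx : memLambda a x)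
    (k : ℕ) {i n : ℕ} (h : i ≤ n) : ‖x i‖ ≤ pk a k x / wt a k n := by
  rw [le_div_iff₀ (wt_pos a k n)]
  calc ‖x i‖ * wt a k n ≤ ‖x i‖ * wt a k i := by
        exact mul_le_mul_of_nonneg_left (wt_anti a hmono k h) (norm_nonneg _)
    _ ≤ pk a k x := by rw [mul_comm]; exact le_pk hx k i

lemma ces_coord_le {x : ℕ → ℂ} {n : ℕ} {M : ℝ} (h : ∀ i ≤ n, ‖x i‖ ≤ M) :
    ‖cesaro x n‖ ≤ M := by
  have hM : 0 ≤ M := (norm_nonneg _).trans (h 0 (Nat.zero_le n))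
  rw [cesaro, norm_div]
  have hcast : ‖(n : ℂ) + 1‖ = (n : ℝ) + 1 := by
    rw [show ((n:ℂ)+1) = ((n+1 : ℕ) : ℂ) by push_cast; ring, Complex.norm_natCast]
    push_cast; ring
  rw [hcast, div_le_iff₀ (by positivity)]
  calc ‖∑ i ∈ Finset.range (n+1), x i‖ ≤ ∑ i ∈ Finset.range (n+1), ‖x i‖ :=
        norm_sum_le _ _
    _ ≤ ∑ _i ∈ Finset.range (n+1), M := Finset.sum_le_sum fun i hi =>
        h i (Nat.lt_succ_iff.mp (Finset.mem_range.mp hi))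
    _ = M * ((n:ℝ)+1) := by rw [Finset.sum_const, Finset.card_range]; push_cast [nsmul_eq_mul]; ring

lemma memLambda_sub {a : ℕ → ℝ} {x y : ℕ → ℂ} (hx : memLambda a x) (hy : memLambda a y) :
    memLambda a (x - y) := by
  intro k
  apply squeeze_zero (fun n => mul_nonneg (wt_pos a k n).le (norm_nonneg _))
    (g := fun n => wt a k n * ‖x n‖ + wt a k n * ‖y n‖)
  · intro n
    rw [← mul_add]
    refine mul_le_mul_of_nonneg_left ?_ (wt_pos a k n).le
    simpa [Pi.sub_apply] using norm_sub_le (x n) (y n)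
  · simpa using (hx k).add (hy k)

lemma memLambda_const (a : ℕ → ℝ) (htop : Tendsto a atTop atTop) (c : ℂ) :
    memLambda a (fun _ => c) := fun k => by
  simpa using (wt_tendsto a htop k).mul_const (‖c‖)

lemma memLambda_of_eventually_eq {a : ℕ → ℝ} {x y : ℕ → ℂ} (hy : memLambda a y)
    (h : ∀ᶠ n in atTop, x n = y n) : memLambda a x := fun k =>
  (hy k).congr' (by filter_upwards [h] with n hn; rw [hn])

lemma ces_coord_le' {x : ℕ → ℂ} {n : ℕ} {M : ℝ} (h : ∀ i ≤ n, ‖x i‖ ≤ M)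
    {j : ℕ} (hj : j ≤ n) : ‖cesaro x j‖ ≤ M :=
  ces_coord_le (fun i hi => h i (hi.trans hj))

lemma iter_coord_le {x : ℕ → ℂ} {n : ℕ} {M : ℝ} (h : ∀ i ≤ n, ‖x i‖ ≤ M)
    (m : ℕ) : ∀ i ≤ n, ‖(cesaro^[m] x) i‖ ≤ M := by
  induction m with
  | zero => exact h
  | succ m ih =>
    intro i hi
    rw [Function.iterate_succ_apply']
    exact ces_coord_le' ih hi

lemma ces_mem {a : ℕ → ℝ} (hmono : StrictMono a) (htop : Tendsto a atTop atTop)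
    {x : ℕ → ℂ} (hx : memLambda a x) : memLambda a (cesaro x) := by
  intro k
  apply squeeze_zero (fun n => mul_nonneg (wt_pos a k n).le (norm_nonneg _))
    (g := fun n => pk a (k+1) x * Real.exp (-(a n) / (((k:ℝ)+1) * ((k:ℝ)+2))))
  · intro n
    have hb : ‖cesaro x n‖ ≤ pk a (k+1) x / wt a (k+1) n :=
      ces_coord_le (fun i hi => abs_le_div hmono hx (k+1) hi)
    calc wt a k n * ‖cesaro x n‖ ≤ wt a k n * (pk a (k+1) x / wt a (k+1) n) :=
          mul_le_mul_of_nonneg_left hb (wt_pos a k n).le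
      _ = pk a (k+1) x * Real.exp (-(a n) / (((k:ℝ)+1) * ((k:ℝ)+2))) := by
          rw [wt_succ a k n]
          field_simp [(wt_pos a (k+1) n).ne']
  · simpa using (exp_div_tendsto a htop (by positivity)).const_mul (pk a (k+1) x)

lemma iter_mem {a : ℕ → ℝ} (hmono : StrictMono a) (htop : Tendsto a atTop atTop)
    {x : ℕ → ℂ} (hx : memLambda a x) (m : ℕ) : memLambda a (cesaro^[m] x) := by
  induction m with
  | zero => exact hx
  | succ m ih => rw [Function.iterate_succ_apply']; exact ces_mem hmono htop ih

lemma ces_pk_le {a : ℕ → ℝ} (hmono : StrictMono a) {x : ℕ → ℂ} (hx : memLambda a x) (k : ℕ) :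
    pk a k (cesaro x) ≤ pk a k x := by
  apply pk_le
  intro n
  have hb : ‖cesaro x n‖ ≤ pk a k x / wt a k n :=
    ces_coord_le (fun i hi => abs_le_div hmono hx k hi)
  calc wt a k n * ‖cesaro x n‖ ≤ wt a k n * (pk a k x / wt a k n) :=
        mul_le_mul_of_nonneg_left hb (wt_pos a k n).le
    _ = pk a k x := by field_simp [(wt_pos a k n).ne']

lemma iter_pk_le {a : ℕ → ℝ} (hmono : StrictMono a) (htop : Tendsto a atTop atTop)
    {x : ℕ → ℂ} (hx : memLambda a x) (m k : ℕ) : pk a k (cesaro^[m] x) ≤ pk a k x := by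
  induction m with
  | zero => exact le_refl _
  | succ m ih =>
    rw [Function.iterate_succ_apply']
    exact (ces_pk_le hmono (iter_mem hmono htop hx m) k).trans ih



lemma ces_zero (x : ℕ → ℂ) : cesaro x 0 = x 0 := by
  simp [cesaro]

lemma iter_zero {x : ℕ → ℂ} (h : x 0 = 0) (m : ℕ) : (cesaro^[m] x) 0 = 0 := by
  induction m with
  | zero => exact h
  | succ m ih => rw [Function.iterate_succ_apply', ces_zero]; exact ih

lemma ces_decay_step {z : ℕ → ℂ} {n : ℕ} {D : ℝ} (h0 : z 0 = 0)
    (h : ∀ i ≤ n, ‖z i‖ ≤ D) :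
    ∀ i ≤ n, ‖cesaro z i‖ ≤ ((n:ℝ)/((n:ℝ)+1)) * D := by
  have hD : 0 ≤ D := (norm_nonneg _).trans (h 0 (Nat.zero_le n))
  intro i hi
  have hsum : ‖∑ t ∈ Finset.range (i+1), z t‖ ≤ (i:ℝ) * D := by
    calc ‖∑ t ∈ Finset.range (i+1), z t‖
        ≤ ∑ t ∈ Finset.range (i+1), ‖z t‖ := norm_sum_le _ _
      _ = ∑ t ∈ Finset.range i, ‖z (t+1)‖ + ‖z 0‖ :=
          Finset.sum_range_succ' _ i
      _ ≤ (i:ℝ) * D := by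
          rw [h0, norm_zero, add_zero]
          calc ∑ t ∈ Finset.range i, ‖z (t+1)‖ ≤ ∑ _t ∈ Finset.range i, D :=
                Finset.sum_le_sum fun t ht => h (t+1)
                  (Nat.succ_le_of_lt ((Finset.mem_range.mp ht).trans_le hi))
            _ = (i:ℝ)*D := by rw [Finset.sum_const, Finset.card_range, nsmul_eq_mul]
  have hcast : ‖(i : ℂ) + 1‖ = (i : ℝ) + 1 := by
    rw [show ((i:ℂ)+1) = ((i+1 : ℕ) : ℂ) by push_cast; ring, Complex.norm_natCast]
    push_cast; ring
  rw [cesaro, norm_div, hcast, div_le_iff₀ (by positivity)]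
  calc ‖∑ t ∈ Finset.range (i+1), z t‖ ≤ (i:ℝ) * D := hsum
    _ ≤ (n:ℝ)/((n:ℝ)+1) * D * ((i:ℝ)+1) := by
      rcases hD.eq_or_lt with hD0 | hD0
      · simp [← hD0]
      rw [div_mul_eq_mul_div, div_mul_eq_mul_div, le_div_iff₀ (by positivity)]
      have : (i:ℝ) ≤ (n:ℝ) := by exact_mod_cast hi
      nlinarith [hD0.le, this, Nat.cast_nonneg (α := ℝ) i]

lemma ces_decay {z : ℕ → ℂ} {n : ℕ} {D : ℝ} (h0 : z 0 = 0)
    (h : ∀ i ≤ n, ‖z i‖ ≤ D) (m : ℕ) :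
    ∀ i ≤ n, ‖(cesaro^[m] z) i‖ ≤ ((n:ℝ)/((n:ℝ)+1))^m * D := by
  induction m with
  | zero => simpa using h
  | succ m ih =>
    intro i hi
    rw [Function.iterate_succ_apply', pow_succ, mul_comm (_^m), mul_assoc]
    exact ces_decay_step (iter_zero h0 m) ih i hi

lemma geom_bound (j n : ℕ) : ∑ m ∈ Finset.range n, ((j:ℝ)/((j:ℝ)+1))^(m+1) ≤ (j:ℝ) := by
  set r : ℝ := (j:ℝ)/((j:ℝ)+1) with hr
  have hj1 : (0:ℝ) < (j:ℝ)+1 := by positivity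
  have hr0 : 0 ≤ r := by positivity
  have hr1 : r < 1 := by rw [hr, div_lt_one hj1]; linarith
  have hsum : ∑ m ∈ Finset.range n, r^m = (1 - r^n) / (1 - r) := by
    rw [geom_sum_eq hr1.ne n]
    rw [div_eq_div_iff (by linarith) (by linarith)]
    ring
  calc ∑ m ∈ Finset.range n, r^(m+1) = r * ∑ m ∈ Finset.range n, r^m := by
        rw [Finset.mul_sum]; exact Finset.sum_congr rfl fun m _ => by ring
    _ ≤ r * (1 / (1 - r)) := by
        rw [hsum]
        refine mul_le_mul_of_nonneg_left (div_le_div_of_nonneg_right ?_ (by linarith)) hr0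
        nlinarith [pow_nonneg hr0 n]
    _ = (j:ℝ) := by
        rw [hr]
        have : 1 - (j:ℝ)/((j:ℝ)+1) = 1/((j:ℝ)+1) := by field_simp; ring
        rw [this]
        field_simp

lemma cesMean_apply (n : ℕ) (x : ℕ → ℂ) (j : ℕ) :
    cesMean n x j = ((n : ℂ))⁻¹ * ∑ m ∈ Finset.range n, (cesaro^[m + 1] x) j := by
  simp [cesMean, Finset.sum_apply]

lemma cesMean_coord_decay {z : ℕ → ℂ} {j : ℕ} {D : ℝ} (h0 : z 0 = 0)
    (h : ∀ i ≤ j, ‖z i‖ ≤ D) {n : ℕ} (hn : 1 ≤ n) :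
    ‖cesMean n z j‖ ≤ (j:ℝ) * D / (n:ℝ) := by
  have hD : 0 ≤ D := (norm_nonneg _).trans (h 0 (Nat.zero_le j))
  rw [cesMean_apply, norm_mul, norm_inv, Complex.norm_natCast]
  have hn0 : (0:ℝ) < (n:ℝ) := by exact_mod_cast hn
  rw [inv_mul_eq_div]
  have hterm : ∀ m, ‖(cesaro^[m+1] z) j‖ ≤ ((j:ℝ)/((j:ℝ)+1))^(m+1) * D :=
    fun m => ces_decay h0 h (m+1) j (le_refl j)
  have key : ‖∑ m ∈ Finset.range n, (cesaro^[m + 1] z) j‖ ≤ (j:ℝ) * D := by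
    calc ‖∑ m ∈ Finset.range n, (cesaro^[m + 1] z) j‖
        ≤ ∑ m ∈ Finset.range n, ‖(cesaro^[m + 1] z) j‖ := norm_sum_le _ _
      _ ≤ ∑ m ∈ Finset.range n, ((j:ℝ)/((j:ℝ)+1))^(m+1) * D :=
          Finset.sum_le_sum fun m _ => hterm m
      _ = (∑ m ∈ Finset.range n, ((j:ℝ)/((j:ℝ)+1))^(m+1)) * D := by rw [← Finset.sum_mul]
      _ ≤ (j:ℝ) * D := mul_le_mul_of_nonneg_right (geom_bound j n) hD
  gcongr
  
lemma cesMean_coord_le {z : ℕ → ℂ} {j : ℕ} {D : ℝ}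
    (h : ∀ i ≤ j, ‖z i‖ ≤ D) {n : ℕ} (hn : 1 ≤ n) :
    ‖cesMean n z j‖ ≤ D := by
  have hD : 0 ≤ D := (norm_nonneg _).trans (h 0 (Nat.zero_le j))
  rw [cesMean_apply, norm_mul, norm_inv, Complex.norm_natCast]
  have hn0 : (0:ℝ) < (n:ℝ) := by exact_mod_cast hn
  rw [inv_mul_eq_div, div_le_iff₀ hn0]
  calc ‖∑ m ∈ Finset.range n, (cesaro^[m + 1] z) j‖
      ≤ ∑ m ∈ Finset.range n, ‖(cesaro^[m + 1] z) j‖ := norm_sum_le _ _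
    _ ≤ ∑ _m ∈ Finset.range n, D := Finset.sum_le_sum fun m _ =>
        iter_coord_le h (m+1) j (le_refl j)
    _ = D * (n:ℝ) := by rw [Finset.sum_const, Finset.card_range, nsmul_eq_mul]; ring
  
lemma cesaro_add (x y : ℕ → ℂ) : cesaro (x + y) = cesaro x + cesaro y := by
  funext n
  simp [cesaro, Finset.sum_add_distrib, add_div]

lemma cesaro_const (c : ℂ) : cesaro (fun _ => c) = (fun _ => c) := by
  funext n
  have : ((n:ℂ)+1) ≠ 0 := Nat.cast_add_one_ne_zero n
  simp [cesaro, this, mul_comm]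

lemma iter_add_const (y : ℕ → ℂ) (c : ℂ) (m : ℕ) :
    cesaro^[m] (y + fun _ => c) = cesaro^[m] y + fun _ => c := by
  induction m with
  | zero => rfl
  | succ m ih =>
    rw [Function.iterate_succ_apply', Function.iterate_succ_apply', ih, cesaro_add, cesaro_const]

lemma cesMean_add_const (y : ℕ → ℂ) (c : ℂ) {n : ℕ} (hn : 1 ≤ n) :
    cesMean n (y + fun _ => c) = cesMean n y + fun _ => c := by
  have hn0 : ((n:ℂ)) ≠ 0 := by exact_mod_cast Nat.cast_ne_zero.mpr (by omega)
  funext j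
  show cesMean n (y + fun _ => c) j = cesMean n y j + c
  rw [cesMean_apply, cesMean_apply]
  simp only [iter_add_const, Pi.add_apply]
  rw [Finset.sum_add_distrib, Finset.sum_const, Finset.card_range, mul_add]
  congr 1
  rw [nsmul_eq_mul, ← mul_assoc, inv_mul_cancel₀ hn0, one_mul]

def Sz (z : ℕ → ℂ) : ℕ → ℂ
  | 0 => 0
  | n+1 => (((n:ℂ)+2)/((n:ℂ)+1)) * (Sz z n + z (n+1))

def yz (z : ℕ → ℂ) : ℕ → ℂ
  | 0 => 0
  | n+1 => Sz z (n+1) - Sz z n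

lemma yz_sum (z : ℕ → ℂ) (n : ℕ) : ∑ i ∈ Finset.range (n+1), yz z i = Sz z n := by
  induction n with
  | zero => simp [yz, Sz]
  | succ n ih => rw [Finset.sum_range_succ, ih]; show Sz z n + (Sz z (n+1) - Sz z n) = _; ring

lemma ces_yz (z : ℕ → ℂ) (n : ℕ) : cesaro (yz z) n = Sz z n / ((n:ℂ)+1) := by
  rw [cesaro, yz_sum]

lemma yz_works (z : ℕ → ℂ) (hz0 : z 0 = 0) : yz z - cesaro (yz z) = z := by
  funext n
  rw [Pi.sub_apply, ces_yz]
  cases n with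
  | zero => simp [yz, Sz, hz0]
  | succ n =>
    have h1 : ((n:ℂ)+1) ≠ 0 := Nat.cast_add_one_ne_zero n
    have h2 : ((n:ℂ)+1+1) ≠ 0 := by
      have := Nat.cast_add_one_ne_zero (R := ℂ) (n+1); push_cast at this; exact this
    show (Sz z (n+1) - Sz z n) - Sz z (n+1) / (((n+1:ℕ):ℂ)+1) = z (n+1)
    rw [show (Sz z (n+1)) = (((n:ℂ)+2)/((n:ℂ)+1)) * (Sz z n + z (n+1)) from rfl]
    push_cast
    field_simp
    ring

lemma Sz_ratio {z : ℕ → ℂ} {N : ℕ} (hN : ∀ m, N ≤ m → z m = 0) :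
    ∀ n, N ≤ n → Sz z n / ((n:ℂ)+1) = Sz z N / ((N:ℂ)+1) := by
  intro n hn
  induction n, hn using Nat.le_induction with
  | base => rfl
  | succ n hn ih =>
    rw [← ih]
    have h1 : ((n:ℂ)+1) ≠ 0 := Nat.cast_add_one_ne_zero n
    have h2 : ((n:ℂ)+1+1) ≠ 0 := by
      have := Nat.cast_add_one_ne_zero (R := ℂ) (n+1); push_cast at this; exact this
    rw [show Sz z (n+1) = (((n:ℂ)+2)/((n:ℂ)+1)) * (Sz z n + z (n+1)) from rfl,
      hN (n+1) (by omega)]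
    push_cast
    field_simp
    ring

lemma yz_eventually_const {z : ℕ → ℂ} {N : ℕ} (hN : ∀ m, N ≤ m → z m = 0) :
    ∀ n, N ≤ n → yz z (n+1) = Sz z N / ((N:ℂ)+1) := by
  intro n hn
  have h1 : ((n:ℂ)+1) ≠ 0 := Nat.cast_add_one_ne_zero n
  have h2 : ((n:ℂ)+1+1) ≠ 0 := by
    have := Nat.cast_add_one_ne_zero (R := ℂ) (n+1); push_cast at this; exact this
  have key : yz z (n+1) = Sz z n / ((n:ℂ)+1) := by
    rw [show yz z (n+1) = Sz z (n+1) - Sz z n from rfl,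
      show Sz z (n+1) = (((n:ℂ)+2)/((n:ℂ)+1)) * (Sz z n + z (n+1)) from rfl,
      hN (n+1) (by omega)]
    field_simp
    ring
  rw [key, Sz_ratio hN n hn]

lemma support_bound {z : ℕ → ℂ} (hfin : (Function.support z).Finite) :
    ∃ N : ℕ, ∀ m, N ≤ m → z m = 0 := by
  rcases hfin.bddAbove with ⟨N, hNb⟩
  refine ⟨N+1, fun m hm => ?_⟩
  by_contra h
  exact absurd (hNb (Function.mem_support.mpr h)) (by omega)

lemma yz_mem (a : ℕ → ℝ) (htop : Tendsto a atTop atTop) {z : ℕ → ℂ}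
    (hfin : (Function.support z).Finite) : memLambda a (yz z) := by
  rcases support_bound hfin with ⟨N, hN⟩
  apply memLambda_of_eventually_eq (memLambda_const a htop (Sz z N / ((N:ℂ)+1)))
  rw [Filter.eventually_atTop]
  refine ⟨N+1, fun n hn => ?_⟩
  obtain ⟨m, rfl⟩ : ∃ m, n = m + 1 := ⟨n - 1, by omega⟩
  exact yz_eventually_const hN m (by omega)

lemma ces_fixed_const {x : ℕ → ℂ} (h : cesaro x = x) : x = fun _ => x 0 := by
  have key : ∀ n, ∑ i ∈ Finset.range (n+1), x i = ((n:ℂ)+1) * x n := by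
    intro n
    have := congrFun h n
    rw [cesaro, div_eq_iff (Nat.cast_add_one_ne_zero n)] at this
    rw [this]; ring
  have step : ∀ n, x (n+1) = x n := by
    intro n
    have e1 := key n
    have e2 := key (n+1)
    rw [Finset.sum_range_succ, e1] at e2
    have h1 : ((n:ℂ)+1) ≠ 0 := Nat.cast_add_one_ne_zero n
    have : ((n:ℂ)+1) * x (n+1) = ((n:ℂ)+1) * x n := by push_cast at e2 ⊢; linear_combination -e2
    exact mul_left_cancel₀ h1 this
  funext n
  induction n with
  | zero => rfl
  | succ n ih => rw [step n, ih]

lemma memLambda_finsupp (a : ℕ → ℝ) (htop : Tendsto a atTop atTop) {z : ℕ → ℂ}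
    (hfin : (Function.support z).Finite) : memLambda a z := by
  rcases support_bound hfin with ⟨N, hN⟩
  apply memLambda_of_eventually_eq (memLambda_const a htop 0)
  rw [Filter.eventually_atTop]
  exact ⟨N, hN⟩

lemma trunc (a : ℕ → ℝ) {x : ℕ → ℂ} (hx : memLambda a x) (hx0 : x 0 = 0)
    (k : ℕ) {ε : ℝ} (hε : 0 < ε) :
    ∃ z : ℕ → ℂ, z 0 = 0 ∧ (Function.support z).Finite ∧ pk a k (x - z) < ε := by
  obtain ⟨N0, hN0⟩ := Metric.tendsto_atTop.mp (hx k) (ε/2) (by linarith)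
  set N := N0 + 1 with hNdef
  refine ⟨fun n => if n < N then x n else 0, by simp [hNdef, hx0], ?_, ?_⟩
  · apply (Set.finite_Iio N).subset
    intro n hn
    rw [Function.mem_support] at hn
    by_contra hn'
    simp only [Set.mem_Iio, not_lt] at hn'
    exact hn (if_neg (not_lt.mpr hn'))
  · refine lt_of_le_of_lt (pk_le fun n => ?_) (by linarith : ε/2 < ε)
    by_cases hn : n < N
    · have hz : wt a k n * ‖(x - fun n => if n < N then x n else 0) n‖ = 0 := by
        simp [Pi.sub_apply, if_pos hn]
      rw [hz]; linarith
    · have h1 : N0 ≤ n := by omega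
      have := hN0 n h1
      rw [Real.dist_eq, sub_zero] at this
      have hlt : wt a k n * ‖x n‖ < ε/2 := (le_abs_self _).trans_lt this
      simpa [Pi.sub_apply, if_neg hn] using hlt.le



lemma closure_range (a : ℕ → ℝ) (hmono : StrictMono a) (htop : Tendsto a atTop atTop) :
    closureIn a ((fun y => y - cesaro y) '' {y : ℕ → ℂ | memLambda a y})
      = {x : ℕ → ℂ | memLambda a x ∧ x 0 = 0} := by
  ext x
  simp only [closureIn, Set.mem_setOf_eq]
  constructor
  · rintro ⟨hxmem, happ⟩
    refine ⟨hxmem, ?_⟩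
    by_contra h0
    have hδ : 0 < wt a 0 0 * ‖x 0‖ := by
      have : ‖x 0‖ ≠ 0 := fun h => h0 (norm_eq_zero.mp h)
      have := (norm_nonneg (x 0)).lt_of_ne' this
      exact mul_pos (wt_pos a 0 0) this
    obtain ⟨y', ⟨y, hy, rfl⟩, hlt⟩ := happ 0 _ hδ
    have hy' : memLambda a (y - cesaro y) := memLambda_sub hy (ces_mem hmono htop hy)
    have hd : memLambda a (x - (y - cesaro y)) := memLambda_sub hxmem hy'
    have := le_pk hd 0 0
    have hc : (x - (y - cesaro y)) 0 = x 0 := by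
      simp [Pi.sub_apply, ces_zero]
    rw [hc] at this
    exact absurd (this.trans_lt hlt) (lt_irrefl _)
  · rintro ⟨hxmem, hx0⟩
    refine ⟨hxmem, fun k ε hε => ?_⟩
    obtain ⟨z, hz0, hfin, hlt⟩ := trunc a hxmem hx0 k hε
    refine ⟨z, ⟨yz z, yz_mem a htop hfin, yz_works z hz0⟩, hlt⟩

lemma closure_finsupp (a : ℕ → ℝ) (hmono : StrictMono a) (htop : Tendsto a atTop atTop) :
    closureIn a {y : ℕ → ℂ | y 0 = 0 ∧ (Function.support y).Finite}
      = {x : ℕ → ℂ | memLambda a x ∧ x 0 = 0} := by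
  ext x
  simp only [closureIn, Set.mem_setOf_eq]
  constructor
  · rintro ⟨hxmem, happ⟩
    refine ⟨hxmem, ?_⟩
    by_contra h0
    have hδ : 0 < wt a 0 0 * ‖x 0‖ := by
      have : ‖x 0‖ ≠ 0 := fun h => h0 (norm_eq_zero.mp h)
      have := (norm_nonneg (x 0)).lt_of_ne' this
      exact mul_pos (wt_pos a 0 0) this
    obtain ⟨y, ⟨hy0, hyfin⟩, hlt⟩ := happ 0 _ hδ
    have hd : memLambda a (x - y) := memLambda_sub hxmem (memLambda_finsupp a htop hyfin)
    have := le_pk hd 0 0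
    have hc : (x - y) 0 = x 0 := by simp [Pi.sub_apply, hy0]
    rw [hc] at this
    exact absurd (this.trans_lt hlt) (lt_irrefl _)
  · rintro ⟨hxmem, hx0⟩
    refine ⟨hxmem, fun k ε hε => ?_⟩
    obtain ⟨z, hz0, hfin, hlt⟩ := trunc a hxmem hx0 k hε
    exact ⟨z, ⟨hz0, hfin⟩, hlt⟩

lemma mean_ergodic (a : ℕ → ℝ) (hmono : StrictMono a) (h1 : ∀ n, 1 < a n)
    (htop : Tendsto a atTop atTop) (B : Set (ℕ → ℂ)) (hB : ∀ x ∈ B, memLambda a x)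
    (hbdd : ∀ k : ℕ, ∃ M : ℝ, ∀ x ∈ B, pk a k x ≤ M) (k : ℕ) {ε : ℝ} (hε : 0 < ε) :
    ∃ N : ℕ, ∀ n ≥ N, ∀ x ∈ B, pk a k (cesMean n x - fun _ => x 0) ≤ ε := by
  obtain ⟨M0, hM0⟩ := hbdd (k+1)
  set M' := max M0 0 with hM'def
  have hM' : ∀ x ∈ B, pk a (k+1) x ≤ M' := fun x hx => (hM0 x hx).trans (le_max_left _ _)
  have hM'0 : 0 ≤ M' := le_max_right _ _
  have hgt : Tendsto (fun j => 2*M' * Real.exp (-(a j)/(((k:ℝ)+1)*((k:ℝ)+2)))) atTop (𝓝 0) := by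
    simpa using (exp_div_tendsto a htop (by positivity)).const_mul (2*M')
  obtain ⟨J, hJ⟩ := Metric.tendsto_atTop.mp hgt ε hε
  have hJbound : ∀ j, J ≤ j → 2*M' * Real.exp (-(a j)/(((k:ℝ)+1)*((k:ℝ)+2))) ≤ ε := by
    intro j hj
    have := hJ j hj
    rw [Real.dist_eq, sub_zero] at this
    exact ((le_abs_self _).trans_lt this).le
  set E := Real.exp ((a J)/((k:ℝ)+2)) with hEdef
  have hE0 : 0 < E := Real.exp_pos _
  set K := (J:ℝ) * (2*M') * E with hKdef
  have hK0 : 0 ≤ K := by positivity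
  obtain ⟨N0, hN0⟩ := exists_nat_ge (K/ε)
  refine ⟨max N0 1, fun n hn x hx => ?_⟩
  have hn1 : 1 ≤ n := le_trans (le_max_right N0 1) hn
  have hnN0 : (N0:ℝ) ≤ (n:ℝ) := by exact_mod_cast le_trans (le_max_left N0 1) hn
  have hnpos : (0:ℝ) < (n:ℝ) := by exact_mod_cast hn1
  have hKn : K/(n:ℝ) ≤ ε := by
    rw [div_le_iff₀ hnpos]
    have h3 : K/ε ≤ (n:ℝ) := hN0.trans hnN0
    calc K = (K/ε) * ε := by field_simp
      _ ≤ (n:ℝ) * ε := by gcongr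
      _ = ε * (n:ℝ) := by ring
  set y := x - (fun _ => x 0) with hy
  have hy0 : y 0 = 0 := by simp [hy]
  have hxy : x = y + fun _ => x 0 := by funext m; simp [hy]
  have hmean : cesMean n x - (fun _ => x 0) = cesMean n y := by
    conv_lhs => rw [hxy]
    rw [cesMean_add_const _ _ hn1]
    funext j
    simp only [Pi.add_apply, Pi.sub_apply, sub_self, sub_zero]
    rw [hy0]
    ring
  rw [hmean]
  have hybd : ∀ j, ∀ i ≤ j, ‖y i‖ ≤ 2*M' / wt a (k+1) j := by
    intro j i hij
    have hwp := wt_pos a (k+1) j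
    have hb1 : ‖x i‖ ≤ M' / wt a (k+1) j :=
      (abs_le_div hmono (hB x hx) (k+1) hij).trans
        ((div_le_div_iff_of_pos_right hwp).mpr (hM' x hx))
    have hb2 : ‖x 0‖ ≤ M' / wt a (k+1) j :=
      (abs_le_div hmono (hB x hx) (k+1) (Nat.zero_le j)).trans
        ((div_le_div_iff_of_pos_right hwp).mpr (hM' x hx))
    have htri : ‖y i‖ ≤ ‖x i‖ + ‖x 0‖ := by
      simp only [hy, Pi.sub_apply]
      simpa using norm_sub_le (x i) (x 0)
    calc ‖y i‖ ≤ M'/wt a (k+1) j + M'/wt a (k+1) j :=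
          htri.trans (add_le_add hb1 hb2)
      _ = 2*M'/wt a (k+1) j := by ring
  apply pk_le
  intro j
  by_cases hj : J ≤ j
  · have hcb : ‖cesMean n y j‖ ≤ 2*M' / wt a (k+1) j :=
      cesMean_coord_le (hybd j) hn1
    calc wt a k j * ‖cesMean n y j‖ ≤ wt a k j * (2*M'/wt a (k+1) j) :=
          mul_le_mul_of_nonneg_left hcb (wt_pos a k j).le
      _ = 2*M' * Real.exp (-(a j)/(((k:ℝ)+1)*((k:ℝ)+2))) := by
          rw [wt_succ a k j]
          field_simp [(wt_pos a (k+1) j).ne']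
      _ ≤ ε := hJbound j hj
  · push_neg at hj
    have hwp := wt_pos a (k+1) j
    have hcb : ‖cesMean n y j‖ ≤ (j:ℝ) * (2*M'/wt a (k+1) j) / (n:ℝ) :=
      cesMean_coord_decay hy0 (hybd j) hn1
    have hinv : 2*M'/wt a (k+1) j ≤ 2*M'*E := by
      have hwE : Real.exp ((a j)/((k:ℝ)+2)) ≤ E := by
        rw [hEdef]
        apply Real.exp_le_exp.mpr
        have : a j ≤ a J := (hmono.monotone hj.le)
        have hk2 : (0:ℝ) < (k:ℝ)+2 := by positivity
        exact div_le_div_of_nonneg_right this hk2.le |>.trans_eq rfl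
      have hid : 1/wt a (k+1) j = Real.exp ((a j)/((k:ℝ)+2)) := by
        rw [wt, one_div, ← Real.exp_neg]
        congr 1
        push_cast
        ring
      calc 2*M'/wt a (k+1) j = 2*M' * (1/wt a (k+1) j) := by ring
        _ = 2*M' * Real.exp ((a j)/((k:ℝ)+2)) := by rw [hid]
        _ ≤ 2*M'*E := by gcongr
    have hjJ : (j:ℝ) ≤ (J:ℝ) := by exact_mod_cast hj.le
    have h2 : wt a k j * ‖cesMean n y j‖ ≤ (j:ℝ) * (2*M'/wt a (k+1) j) / (n:ℝ) := by
      calc wt a k j * ‖cesMean n y j‖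
          ≤ 1 * ‖cesMean n y j‖ :=
            mul_le_mul_of_nonneg_right (wt_le_one a h1 k j) (norm_nonneg _)
        _ = ‖cesMean n y j‖ := one_mul _
        _ ≤ (j:ℝ) * (2*M'/wt a (k+1) j) / (n:ℝ) := hcb
    have h3 : (j:ℝ) * (2*M'/wt a (k+1) j) ≤ K := by
      calc (j:ℝ)*(2*M'/wt a (k+1) j) ≤ (J:ℝ)*(2*M'*E) :=
            mul_le_mul hjJ hinv (div_nonneg (by positivity) hwp.le) (Nat.cast_nonneg J)
        _ = K := by rw [hKdef]; ring
    calc wt a k j * ‖cesMean n y j‖ ≤ (j:ℝ) * (2*M'/wt a (k+1) j) / (n:ℝ) := h2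
      _ ≤ K/(n:ℝ) := by gcongr
      _ ≤ ε := hKn


/-- the Cesàro operator on `Λ₀(α)` is power bounded
(`p_k(C^n x) ≤ p_k(x)`) and uniformly mean ergodic (its Cesàro means converge
uniformly on bounded sets); `Ker(I - C) = span{𝟙}`;
`closure((I - C)(Λ₀(α))) = {x ∈ Λ₀(α) : x_1 = 0}`, which is the closed linear span
of `{e_n : n ≥ 2}`; and `Λ₀(α) = Ker(I - C) ⊕ closure((I - C)(Λ₀(α)))`. -/
theorem stmt16 (a : ℕ → ℝ) (hmono : StrictMono a) (h1 : ∀ n, 1 < a n)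
    (htop : Tendsto a atTop atTop) :
    (∀ (m k : ℕ) (x : ℕ → ℂ), memLambda a x → pk a k (cesaro^[m] x) ≤ pk a k x) ∧
    (∃ P : (ℕ → ℂ) → (ℕ → ℂ),
      (∀ x, memLambda a x → memLambda a (P x)) ∧
      ∀ B : Set (ℕ → ℂ), (∀ x ∈ B, memLambda a x) →
        (∀ k : ℕ, ∃ M : ℝ, ∀ x ∈ B, pk a k x ≤ M) →
        ∀ k : ℕ, ∀ ε : ℝ, 0 < ε → ∃ N : ℕ, ∀ n ≥ N, ∀ x ∈ B,
          pk a k (cesMean n x - P x) ≤ ε) ∧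
    ({x : ℕ → ℂ | memLambda a x ∧ cesaro x = x} = {x : ℕ → ℂ | ∃ c : ℂ, x = fun _ => c}) ∧
    (closureIn a ((fun y => y - cesaro y) '' {y : ℕ → ℂ | memLambda a y})
      = {x : ℕ → ℂ | memLambda a x ∧ x 0 = 0}) ∧
    (closureIn a {y : ℕ → ℂ | y 0 = 0 ∧ (Function.support y).Finite}
      = {x : ℕ → ℂ | memLambda a x ∧ x 0 = 0}) ∧
    (∀ x : ℕ → ℂ, memLambda a x → ∃! p : (ℕ → ℂ) × (ℕ → ℂ),
      (memLambda a p.1 ∧ cesaro p.1 = p.1) ∧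
      p.2 ∈ closureIn a ((fun y => y - cesaro y) '' {y : ℕ → ℂ | memLambda a y}) ∧
      x = p.1 + p.2) := by
  refine ⟨fun m k x hx => iter_pk_le hmono htop hx m k,
    ⟨fun x => fun _ => x 0, fun x _ => memLambda_const a htop (x 0),
      fun B hB hbdd k ε hε => mean_ergodic a hmono h1 htop B hB hbdd k hε⟩,
    ?_, closure_range a hmono htop, closure_finsupp a hmono htop, ?_⟩
  · ext x
    simp only [Set.mem_setOf_eq]
    constructor
    · rintro ⟨_, hfix⟩
      exact ⟨x 0, ces_fixed_const hfix⟩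
    · rintro ⟨c, rfl⟩
      exact ⟨memLambda_const a htop c, cesaro_const c⟩
  · intro x hx
    refine ⟨(fun _ => x 0, x - fun _ => x 0),
      ⟨⟨memLambda_const a htop (x 0), cesaro_const (x 0)⟩, ?_, ?_⟩, ?_⟩
    · rw [closure_range a hmono htop]
      exact ⟨memLambda_sub hx (memLambda_const a htop (x 0)), by simp⟩
    · funext n
      simp only [Pi.add_apply, Pi.sub_apply]
      ring
    · rintro ⟨q1, q2⟩ ⟨⟨hq1m, hq1f⟩, hq2, hsum⟩
      have hq1c : q1 = fun _ => q1 0 := ces_fixed_const hq1f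
      rw [closure_range a hmono htop] at hq2
      obtain ⟨hq2m, hq20⟩ := hq2
      have h0 : x 0 = q1 0 := by
        have := congrFun hsum 0
        rw [Pi.add_apply, hq20, add_zero] at this
        exact this
      have hq1x : q1 = fun _ => x 0 := by rw [hq1c, h0]
      have hq2x : q2 = x - fun _ => x 0 := by
        funext n
        have hn : x n = q1 n + q2 n := congrFun hsum n
        rw [Pi.sub_apply]
        have hq1n : q1 n = x 0 := by rw [hq1x]
        rw [hq1n] at hn
        linear_combination -hn
      exact Prod.ext hq1x hq2x
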